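/- arXiv:1705.10426 — 8 statements merged into one kernel-verified Lean document; each statement's English description precedes it below -/
import Mathlib

section
/- Let k be an algebraically closed field of characteristic ≠ 2 and α ∈ k with α(1−α²) ≠ 0. A point (λ₁,λ₂,λ₃,λ₄) ∈ P³ lies in the common zero locus of the 15 polynomials defining the point scheme of A(α) if and only if it belongs to Z₀ ∪ Z₁ ∪ Z₂ ∪ Z₃ ∪ Z₄, where Z₀ = {e₁,e₂,e₃,e₄} (the coordinate points), Z₁ = {(λ₁,1,λ₃,1) : λ₁² = −2(1+α), λ₃² = 2}, Z₂ = {(λ₁,−1,λ₃,1) : λ₁² = −2(1−α), λ₃² = −2}, Z₃ = {(λ₁,λ₂,0,1) : λ₁² = −2, λ₂² = −1}, and Z₄ = {(0,λ₂,λ₃,1) : αλ₂² + 2λ₂ + α = 0, αλ₃² = −2λ₂²}. -/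
/-
In the affine chart x₄ = 1 the equations factor. If x₃ = 0 they contain x₂(x₂² + 1),
x₁(x₂² + 1) and x₂²(x₁² + 2), which leaves the origin and Z₃. If x₃ ≠ 0 = x₁ they reduce to
the two equations of Z₄. If x₁x₃ ≠ 0 they give x₃² = 2x₂, x₂ = ±1 and x₁² = -2x₂² - αx₃²,
i.e. Z₁ or Z₂. The equations are homogeneous of degree 4, so every point with x₄ ≠ 0 is a
multiple of such an affine point. On the hyperplane x₄ = 0 they contain x₁²x₂², x₁²x₃² and
αx₂²x₃², so only the coordinate points survive.
-/

/-- The 15 polynomials (the 4×4 minors of the matrix M) defining the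
point scheme of A(α), evaluated at (x₁,x₂,x₃,x₄). -/
def PointSchemeEqs {k : Type*} [Field k] (α x1 x2 x3 x4 : k) : Prop :=
  x1 * x3 * (x1 ^ 2 + 2 * x2 ^ 2 + α * x3 ^ 2) = 0 ∧
  x1 * x3 * (x3 ^ 2 - 2 * x2 * x4) = 0 ∧
  x1 * x3 * (x2 - x4) * (x2 + x4) = 0 ∧
  x2 * x3 * (x1 ^ 2 + 2 * x2 ^ 2 + α * x3 ^ 2) = 0 ∧
  x3 * x4 * (x1 ^ 2 + 2 * x2 ^ 2 + α * x3 ^ 2) = 0 ∧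
  x3 * (x2 ^ 3 - x3 ^ 2 * x4 + x2 * x4 ^ 2) = 0 ∧
  x1 * (2 * x2 * x3 ^ 2 + x1 ^ 2 * x4 - 2 * x2 ^ 2 * x4 + α * x3 ^ 2 * x4) = 0 ∧
  x1 * x2 * (x1 ^ 2 + α * x3 ^ 2 + 2 * x4 ^ 2) = 0 ∧
  x1 * (-(x2 * x3 ^ 2) + x2 ^ 2 * x4 + x4 ^ 3) = 0 ∧
  x1 ^ 2 * x2 ^ 2 + α * x2 ^ 2 * x3 ^ 2 + 2 * x2 * x3 ^ 2 * x4
    + x1 ^ 2 * x4 ^ 2 + α * x3 ^ 2 * x4 ^ 2 = 0 ∧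
  x1 ^ 2 * x3 ^ 2 - x1 ^ 2 * x2 * x4 + 2 * x2 ^ 3 * x4 + α * x2 * x3 ^ 2 * x4 = 0 ∧
  x1 ^ 2 * x2 ^ 2 + 2 * x2 ^ 2 * x4 ^ 2 + α * x3 ^ 2 * x4 ^ 2 = 0 ∧
  x4 * (x2 ^ 3 - x3 ^ 2 * x4 + x2 * x4 ^ 2) = 0 ∧
  x1 * (x2 ^ 3 - x3 ^ 2 * x4 + x2 * x4 ^ 2) = 0 ∧
  x3 * (x1 ^ 2 * x2 + α * x2 ^ 2 * x4 + 2 * x2 * x4 ^ 2 + α * x4 ^ 3) = 0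

section PointScheme

variable {k : Type*} [Field k] {α x1 x2 x3 x4 : k}

theorem PointSchemeEqs.mul (c : k) (h : PointSchemeEqs α x1 x2 x3 x4) :
    PointSchemeEqs α (c * x1) (c * x2) (c * x3) (c * x4) := by
  obtain ⟨h1, h2, h3, h4, h5, h6, h7, h8, h9, h10, h11, h12, h13, h14, h15⟩ := h
  exact ⟨by linear_combination c ^ 4 * h1, by linear_combination c ^ 4 * h2,
    by linear_combination c ^ 4 * h3, by linear_combination c ^ 4 * h4,
    by linear_combination c ^ 4 * h5, by linear_combination c ^ 4 * h6,
    by linear_combination c ^ 4 * h7, by linear_combination c ^ 4 * h8,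
    by linear_combination c ^ 4 * h9, by linear_combination c ^ 4 * h10,
    by linear_combination c ^ 4 * h11, by linear_combination c ^ 4 * h12,
    by linear_combination c ^ 4 * h13, by linear_combination c ^ 4 * h14,
    by linear_combination c ^ 4 * h15⟩

theorem pointSchemeEqs_mul_iff {c : k} (hc : c ≠ 0) :
    PointSchemeEqs α (c * x1) (c * x2) (c * x3) (c * x4) ↔ PointSchemeEqs α x1 x2 x3 x4 :=
  ⟨fun h => by simpa only [inv_mul_cancel_left₀ hc] using h.mul c⁻¹, PointSchemeEqs.mul c⟩

theorem PointSchemeEqs.exists_affine (hx4 : x4 ≠ 0) (h : PointSchemeEqs α x1 x2 x3 x4) :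
    ∃ y1 y2 y3, PointSchemeEqs α y1 y2 y3 1 ∧ x1 = x4 * y1 ∧ x2 = x4 * y2 ∧ x3 = x4 * y3 := by
  have hu : IsUnit x4 := .mk0 x4 hx4
  obtain ⟨y1, rfl⟩ := hu.dvd (a := x1)
  obtain ⟨y2, rfl⟩ := hu.dvd (a := x2)
  obtain ⟨y3, rfl⟩ := hu.dvd (a := x3)
  exact ⟨y1, y2, y3, (pointSchemeEqs_mul_iff hx4).1 (by rwa [mul_one]), rfl, rfl, rfl⟩

theorem PointSchemeEqs.exists_coordinate_point (hα : α ≠ 0) (h : PointSchemeEqs α x1 x2 x3 0)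
    (hne : ¬(x1 = 0 ∧ x2 = 0 ∧ x3 = 0)) :
    ∃ c ≠ 0, (x1 = c ∧ x2 = 0 ∧ x3 = 0) ∨ (x1 = 0 ∧ x2 = c ∧ x3 = 0) ∨
      (x1 = 0 ∧ x2 = 0 ∧ x3 = c) := by
  obtain ⟨-, -, -, -, -, -, -, -, -, h10, h11, h12, -, -, -⟩ := h
  have hx12 : x1 * x2 = 0 := pow_eq_zero_iff two_ne_zero |>.mp (by linear_combination h12)
  have hx13 : x1 * x3 = 0 := pow_eq_zero_iff two_ne_zero |>.mp (by linear_combination h11)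
  have hx23 : x2 * x3 = 0 := by
    have : α * (x2 * x3) ^ 2 = 0 := by linear_combination h10 - h12
    exact pow_eq_zero_iff two_ne_zero |>.mp ((mul_eq_zero.mp this).resolve_left hα)
  by_cases hx1 : x1 = 0
  · by_cases hx2 : x2 = 0
    · exact ⟨x3, fun hx3 => hne ⟨hx1, hx2, hx3⟩, .inr (.inr ⟨hx1, hx2, rfl⟩)⟩
    · exact ⟨x2, hx2, .inr (.inl ⟨hx1, rfl, (mul_eq_zero.mp hx23).resolve_left hx2⟩)⟩
  · exact ⟨x1, hx1, .inl ⟨rfl, (mul_eq_zero.mp hx12).resolve_left hx1,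
      (mul_eq_zero.mp hx13).resolve_left hx1⟩⟩

theorem pointSchemeEqs_Z1 {m1 m3 : k} (hm1 : m1 ^ 2 = -2 * (1 + α)) (hm3 : m3 ^ 2 = 2) :
    PointSchemeEqs α m1 1 m3 1 :=
  ⟨by linear_combination m1 * m3 * hm1 + α * m1 * m3 * hm3, by linear_combination m1 * m3 * hm3,
    by ring, by linear_combination m3 * hm1 + α * m3 * hm3,
    by linear_combination m3 * hm1 + α * m3 * hm3, by linear_combination -m3 * hm3,
    by linear_combination m1 * hm1 + (2 + α) * m1 * hm3,
    by linear_combination m1 * hm1 + α * m1 * hm3,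
    by linear_combination -m1 * hm3, by linear_combination 2 * hm1 + (2 + 2 * α) * hm3,
    by linear_combination (m3 ^ 2 - 1) * hm1 - (2 + α) * hm3, by linear_combination hm1 + α * hm3,
    by linear_combination -hm3, by linear_combination -m1 * hm3, by linear_combination m3 * hm1⟩

theorem pointSchemeEqs_Z2 {m1 m3 : k} (hm1 : m1 ^ 2 = -2 * (1 - α)) (hm3 : m3 ^ 2 = -2) :
    PointSchemeEqs α m1 (-1) m3 1 :=
  ⟨by linear_combination m1 * m3 * hm1 + α * m1 * m3 * hm3, by linear_combination m1 * m3 * hm3,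
    by ring, by linear_combination -m3 * hm1 - α * m3 * hm3,
    by linear_combination m3 * hm1 + α * m3 * hm3, by linear_combination -m3 * hm3,
    by linear_combination m1 * hm1 + (α - 2) * m1 * hm3,
    by linear_combination -m1 * hm1 - α * m1 * hm3,
    by linear_combination m1 * hm3, by linear_combination 2 * hm1 + (2 * α - 2) * hm3,
    by linear_combination (m3 ^ 2 + 1) * hm1 + (α - 2) * hm3, by linear_combination hm1 + α * hm3,
    by linear_combination -hm3, by linear_combination -m1 * hm3, by linear_combination -m3 * hm1⟩

theorem pointSchemeEqs_Z3 {m1 m2 : k} (hm1 : m1 ^ 2 = -2) (hm2 : m2 ^ 2 = -1) :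
    PointSchemeEqs α m1 m2 0 1 :=
  ⟨by ring, by ring, by ring, by ring, by ring, by ring,
    by linear_combination m1 * hm1 - 2 * m1 * hm2, by linear_combination m1 * m2 * hm1,
    by linear_combination m1 * hm2, by linear_combination m1 ^ 2 * hm2,
    by linear_combination -m2 * hm1 + 2 * m2 * hm2, by linear_combination m2 ^ 2 * hm1,
    by linear_combination m2 * hm2, by linear_combination m1 * m2 * hm2, by ring⟩

theorem pointSchemeEqs_Z4 (hα : α ≠ 0) {m2 m3 : k} (hm2 : α * m2 ^ 2 + 2 * m2 + α = 0)
    (hm3 : α * m3 ^ 2 = -2 * m2 ^ 2) : PointSchemeEqs α 0 m2 m3 1 := by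
  have hcubic : m2 ^ 3 - m3 ^ 2 * 1 + m2 * 1 ^ 2 = 0 :=
    (mul_eq_zero.mp (by linear_combination m2 * hm2 - hm3 :
      α * (m2 ^ 3 - m3 ^ 2 * 1 + m2 * 1 ^ 2) = 0)).resolve_left hα
  exact ⟨by ring, by ring, by ring, by linear_combination m2 * m3 * hm3,
    by linear_combination m3 * hm3, by rw [hcubic, mul_zero], by ring, by ring, by ring,
    by linear_combination m3 ^ 2 * hm2, by linear_combination m2 * hm3, by linear_combination hm3,
    by rw [hcubic, mul_zero], by ring, by linear_combination m3 * hm2⟩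

theorem PointSchemeEqs.affine_cases (h : PointSchemeEqs α x1 x2 x3 1) :
    (x1 = 0 ∧ x2 = 0 ∧ x3 = 0) ∨
    (x1 ^ 2 = -2 * (1 + α) ∧ x2 = 1 ∧ x3 ^ 2 = 2) ∨
    (x1 ^ 2 = -2 * (1 - α) ∧ x2 = -1 ∧ x3 ^ 2 = -2) ∨
    (x1 ^ 2 = -2 ∧ x2 ^ 2 = -1 ∧ x3 = 0) ∨
    (x1 = 0 ∧ α * x2 ^ 2 + 2 * x2 + α = 0 ∧ α * x3 ^ 2 = -2 * x2 ^ 2) := by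
  obtain ⟨h1, h2, h3, -, -, -, -, -, h9, -, -, h12, h13, -, h15⟩ := h
  by_cases hx3 : x3 = 0
  · subst hx3
    by_cases hq : x2 ^ 2 + 1 = 0
    · have hx2 : x2 ^ 2 ≠ 0 := fun h0 => one_ne_zero (α := k) (by linear_combination hq - h0)
      have hx1 : x2 ^ 2 * (x1 ^ 2 + 2) = 0 := by linear_combination h12
      refine .inr (.inr (.inr (.inl ⟨?_, by linear_combination hq, rfl⟩)))
      linear_combination (mul_eq_zero.mp hx1).resolve_left hx2
    · have hx2 : x2 = 0 := (mul_eq_zero.mp (by linear_combination h13 :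
        x2 * (x2 ^ 2 + 1) = 0)).resolve_right hq
      have hx1 : x1 = 0 := (mul_eq_zero.mp (by linear_combination h9 :
        x1 * (x2 ^ 2 + 1) = 0)).resolve_right hq
      exact .inl ⟨hx1, hx2, rfl⟩
  by_cases hx1 : x1 = 0
  · subst hx1
    have hq : x3 * (α * x2 ^ 2 + 2 * x2 + α) = 0 := by linear_combination h15
    exact .inr (.inr (.inr (.inr ⟨rfl, (mul_eq_zero.mp hq).resolve_left hx3,
      by linear_combination h12⟩)))
  have hx13 : x1 * x3 ≠ 0 := mul_ne_zero hx1 hx3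
  have hx3sq : x3 ^ 2 = 2 * x2 := by linear_combination (mul_eq_zero.mp h2).resolve_left hx13
  have hx1sq : x1 ^ 2 + 2 * x2 ^ 2 + α * x3 ^ 2 = 0 := (mul_eq_zero.mp h1).resolve_left hx13
  have hx2 : (x2 - 1) * (x2 + 1) = 0 :=
    (mul_eq_zero.mp (by linear_combination h3 : x1 * x3 * ((x2 - 1) * (x2 + 1)) = 0)).resolve_left
      hx13
  rcases mul_eq_zero.mp hx2 with hx2 | hx2
  · obtain rfl : x2 = 1 := by linear_combination hx2
    exact .inr (.inl ⟨by linear_combination hx1sq - α * hx3sq, rfl, by linear_combination hx3sq⟩)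
  · obtain rfl : x2 = -1 := by linear_combination hx2
    exact .inr (.inr (.inl ⟨by linear_combination hx1sq - α * hx3sq, rfl,
      by linear_combination hx3sq⟩))

end PointScheme

theorem stmt_3_general (k : Type*) [Field k] (α : k) (hα : α * (1 - α ^ 2) ≠ 0)
    (l1 l2 l3 l4 : k) (hne : ¬(l1 = 0 ∧ l2 = 0 ∧ l3 = 0 ∧ l4 = 0)) :
    PointSchemeEqs α l1 l2 l3 l4 ↔
      ∃ c : k, c ≠ 0 ∧
        ((l1 = c ∧ l2 = 0 ∧ l3 = 0 ∧ l4 = 0) ∨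
         (l1 = 0 ∧ l2 = c ∧ l3 = 0 ∧ l4 = 0) ∨
         (l1 = 0 ∧ l2 = 0 ∧ l3 = c ∧ l4 = 0) ∨
         (l1 = 0 ∧ l2 = 0 ∧ l3 = 0 ∧ l4 = c) ∨
         (∃ m1 m3 : k, m1 ^ 2 = -2 * (1 + α) ∧ m3 ^ 2 = 2 ∧
            l1 = c * m1 ∧ l2 = c ∧ l3 = c * m3 ∧ l4 = c) ∨
         (∃ m1 m3 : k, m1 ^ 2 = -2 * (1 - α) ∧ m3 ^ 2 = -2 ∧
            l1 = c * m1 ∧ l2 = -c ∧ l3 = c * m3 ∧ l4 = c) ∨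
         (∃ m1 m2 : k, m1 ^ 2 = -2 ∧ m2 ^ 2 = -1 ∧
            l1 = c * m1 ∧ l2 = c * m2 ∧ l3 = 0 ∧ l4 = c) ∨
         (∃ m2 m3 : k, α * m2 ^ 2 + 2 * m2 + α = 0 ∧ α * m3 ^ 2 = -2 * m2 ^ 2 ∧
            l1 = 0 ∧ l2 = c * m2 ∧ l3 = c * m3 ∧ l4 = c)) := by
  have hα0 : α ≠ 0 := left_ne_zero_of_mul hα
  constructor
  · intro h
    by_cases hl4 : l4 = 0
    · subst hl4
      obtain ⟨c, hc, hcoord⟩ :=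
        h.exists_coordinate_point hα0 fun h0 => hne ⟨h0.1, h0.2.1, h0.2.2, rfl⟩
      exact ⟨c, hc, by tauto⟩
    obtain ⟨x1, x2, x3, hx, rfl, rfl, rfl⟩ := h.exists_affine hl4
    refine ⟨l4, hl4, .inr (.inr (.inr ?_))⟩
    rcases hx.affine_cases with ⟨rfl, rfl, rfl⟩ | ⟨h1, rfl, h3⟩ | ⟨h1, rfl, h3⟩ | ⟨h1, h2, rfl⟩ |
      ⟨rfl, h2, h3⟩
    exacts [.inl ⟨mul_zero l4, mul_zero l4, mul_zero l4, rfl⟩,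
      .inr (.inl ⟨x1, x3, h1, h3, rfl, mul_one l4, rfl, rfl⟩),
      .inr (.inr (.inl ⟨x1, x3, h1, h3, rfl, mul_neg_one l4, rfl, rfl⟩)),
      .inr (.inr (.inr (.inl ⟨x1, x2, h1, h2, rfl, rfl, mul_zero l4, rfl⟩))),
      .inr (.inr (.inr (.inr ⟨x2, x3, h2, h3, mul_zero l4, rfl, rfl, rfl⟩)))]
  · rintro ⟨_, -, ⟨rfl, rfl, rfl, rfl⟩ | ⟨rfl, rfl, rfl, rfl⟩ | ⟨rfl, rfl, rfl, rfl⟩ |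
      ⟨rfl, rfl, rfl, rfl⟩ | ⟨m1, m3, hm1, hm3, rfl, rfl, rfl, rfl⟩ |
      ⟨m1, m3, hm1, hm3, rfl, rfl, rfl, rfl⟩ | ⟨m1, m2, hm1, hm2, rfl, rfl, rfl, rfl⟩ |
      ⟨m2, m3, hm2, hm3, rfl, rfl, rfl, rfl⟩⟩
    iterate 4 simp [PointSchemeEqs]
    · simpa only [mul_one] using (pointSchemeEqs_Z1 hm1 hm3).mul l4
    · simpa only [mul_one, mul_neg] using (pointSchemeEqs_Z2 hm1 hm3).mul l4
    · simpa only [mul_one, mul_zero] using (pointSchemeEqs_Z3 (α := α) hm1 hm2).mul l4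
    · simpa only [mul_one, mul_zero] using (pointSchemeEqs_Z4 hα0 hm2 hm3).mul l4

theorem stmt_3 (k : Type*) [Field k] [IsAlgClosed k] (hchar : (2 : k) ≠ 0)
    (α : k) (hα : α * (1 - α ^ 2) ≠ 0)
    (l1 l2 l3 l4 : k) (hne : ¬(l1 = 0 ∧ l2 = 0 ∧ l3 = 0 ∧ l4 = 0)) :
    PointSchemeEqs α l1 l2 l3 l4 ↔
      ∃ c : k, c ≠ 0 ∧
        ((l1 = c ∧ l2 = 0 ∧ l3 = 0 ∧ l4 = 0) ∨
         (l1 = 0 ∧ l2 = c ∧ l3 = 0 ∧ l4 = 0) ∨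
         (l1 = 0 ∧ l2 = 0 ∧ l3 = c ∧ l4 = 0) ∨
         (l1 = 0 ∧ l2 = 0 ∧ l3 = 0 ∧ l4 = c) ∨
         (∃ m1 m3 : k, m1 ^ 2 = -2 * (1 + α) ∧ m3 ^ 2 = 2 ∧
            l1 = c * m1 ∧ l2 = c ∧ l3 = c * m3 ∧ l4 = c) ∨
         (∃ m1 m3 : k, m1 ^ 2 = -2 * (1 - α) ∧ m3 ^ 2 = -2 ∧
            l1 = c * m1 ∧ l2 = -c ∧ l3 = c * m3 ∧ l4 = c) ∨
         (∃ m1 m2 : k, m1 ^ 2 = -2 ∧ m2 ^ 2 = -1 ∧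
            l1 = c * m1 ∧ l2 = c * m2 ∧ l3 = 0 ∧ l4 = c) ∨
         (∃ m2 m3 : k, α * m2 ^ 2 + 2 * m2 + α = 0 ∧ α * m3 ^ 2 = -2 * m2 ^ 2 ∧
            l1 = 0 ∧ l2 = c * m2 ∧ l3 = c * m3 ∧ l4 = c)) :=
  stmt_3_general k α hα l1 l2 l3 l4 hne
end

section
/- Let k be an algebraically closed field of characteristic 0 and α ∈ k with α(1−α²) ≠ 0. The projective variety in P³ with coordinates (M₁₂, M₁₄, M₂₃, M₃₄) cut out by f₁ = M₁₂M₃₄ + M₁₄M₂₃ and g₁ = M₁₂² + M₁₄² + αM₂₃² − 2M₂₃M₃₄ + αM₃₄² is smooth, i.e., the Jacobian matrix of (f₁, g₁) has rank two at every point of V(f₁, g₁). -/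
/-!
The gradient of `g₁` vanishes only at the origin: it forces `M₁₂ = M₁₄ = 0` and
`(M₂₃, M₃₄)` in the kernel of `[[α, -1], [-1, α]]`, whose determinant is `α² - 1 ≠ 0`.
So rank two fails only if `∇f₁ = μ ∇g₁`. Weighting its first two coordinates by `M₃₄` and
`M₂₃` gives `M₂₃² + M₃₄² = 2μ f₁ = 0`, while substituting it into itself gives
`μ² (M₃₄² - M₂₃²) = 0`; hence `μ M₂₃ = μ M₃₄ = 0`, and then every coordinate vanishes.
-/

section

variable {K : Type*} [Field K]

def gradF₁ (M12 M14 M23 M34 : K) : Fin 4 → K := ![M34, M23, M14, M12]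

def gradG₁ (α M12 M14 M23 M34 : K) : Fin 4 → K :=
  ![2 * M12, 2 * M14, 2 * (α * M23 - M34), 2 * (α * M34 - M23)]

variable [NeZero (2 : K)] {α M12 M14 M23 M34 : K}

lemma gradG₁_ne_zero (hα : 1 - α ^ 2 ≠ 0)
    (hne : ¬(M12 = 0 ∧ M14 = 0 ∧ M23 = 0 ∧ M34 = 0)) :
    gradG₁ α M12 M14 M23 M34 ≠ 0 := by
  intro h
  simp only [gradG₁, ← Matrix.cons_zero_zero, Matrix.vecCons_inj, mul_eq_zero, two_ne_zero,
    false_or] at h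
  obtain ⟨h12, h14, e3, e4, -⟩ := h
  have h34 : (1 - α ^ 2) * M34 = 0 := by linear_combination (-α) * e4 - e3
  have h23 : (1 - α ^ 2) * M23 = 0 := by linear_combination (-α) * e3 - e4
  exact hne ⟨h12, h14, (mul_eq_zero.mp h23).resolve_left hα,
    (mul_eq_zero.mp h34).resolve_left hα⟩

lemma eq_zero_of_smul_gradG₁_eq_gradF₁ {μ : K} (hf : M12 * M34 + M14 * M23 = 0)
    (h : μ • gradG₁ α M12 M14 M23 M34 = gradF₁ M12 M14 M23 M34) :
    M12 = 0 ∧ M14 = 0 ∧ M23 = 0 ∧ M34 = 0 := by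
  simp only [gradG₁, gradF₁, Matrix.smul_cons, Matrix.smul_empty, Matrix.vecCons_inj,
    smul_eq_mul] at h
  obtain ⟨e1, e2, e3, e4, -⟩ := h
  have hsum : M23 ^ 2 + M34 ^ 2 = 0 := by
    linear_combination (-M34) * e1 - M23 * e2 + 2 * μ * hf
  have hdiff : (2 * μ) ^ 2 * (M34 ^ 2 - M23 ^ 2) = 0 := by
    linear_combination M23 * (e1 + 2 * μ * e4) - M34 * (e2 + 2 * μ * e3)
  have h23 : 2 * μ * M23 = 0 := by
    have : 2 * (2 * μ * M23) ^ 2 = 0 := by linear_combination (2 * μ) ^ 2 * hsum - hdiff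
    exact pow_eq_zero_iff two_ne_zero |>.mp ((mul_eq_zero.mp this).resolve_left two_ne_zero)
  have h34 : 2 * μ * M34 = 0 := by
    have : (2 * μ * M34) ^ 2 = 0 := by linear_combination (2 * μ) ^ 2 * hsum - 2 * μ * M23 * h23
    exact pow_eq_zero_iff two_ne_zero |>.mp this
  have h14 : M14 = 0 := by linear_combination -e3 + α * h23 - h34
  have h12 : M12 = 0 := by linear_combination -e4 + α * h34 - h23
  exact ⟨h12, h14, by linear_combination -e2 + 2 * μ * h14,
    by linear_combination -e1 + 2 * μ * h12⟩

end

theorem stmt_4_general (k : Type*) [Field k] [CharZero k]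
    (α : k) (hα : α * (1 - α ^ 2) ≠ 0)
    (M12 M14 M23 M34 : k) (hne : ¬(M12 = 0 ∧ M14 = 0 ∧ M23 = 0 ∧ M34 = 0))
    (hf : M12 * M34 + M14 * M23 = 0) :
    Matrix.rank !![M34, M23, M14, M12;
                   2 * M12, 2 * M14, 2 * (α * M23 - M34), 2 * (α * M34 - M23)] = 2 := by
  have hli : LinearIndependent k ![gradF₁ M12 M14 M23 M34, gradG₁ α M12 M14 M23 M34] := by
    rw [LinearIndependent.pair_symm_iff,
      LinearIndependent.pair_iff' (gradG₁_ne_zero (right_ne_zero_of_mul hα) hne)]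
    exact fun μ h => hne (eq_zero_of_smul_gradG₁_eq_gradF₁ hf h)
  exact hli.rank_matrix

theorem stmt_4 (k : Type*) [Field k] [IsAlgClosed k] [CharZero k]
    (α : k) (hα : α * (1 - α ^ 2) ≠ 0)
    (M12 M14 M23 M34 : k) (hne : ¬(M12 = 0 ∧ M14 = 0 ∧ M23 = 0 ∧ M34 = 0))
    (hf : M12 * M34 + M14 * M23 = 0)
    (hg : M12 ^ 2 + M14 ^ 2 + α * M23 ^ 2 - 2 * M23 * M34 + α * M34 ^ 2 = 0) :
    Matrix.rank !![M34, M23, M14, M12;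
                   2 * M12, 2 * M14, 2 * (α * M23 - M34), 2 * (α * M34 - M23)] = 2 :=
  stmt_4_general k α hα M12 M14 M23 M34 hne hf
end

section
/- Let k be an algebraically closed field of characteristic 0 and α ∈ k with α(1−α²) ≠ 0. Consider the curve in P³ (coordinates M₁₂, M₁₃, M₂₄, M₃₄) cut out by f₂ = M₁₂M₃₄ − M₁₃M₂₄ and g₂ = M₁₂² + 2M₂₄² + αM₃₄². The point ε₂ = (0,1,0,0) is the unique point of V(f₂, g₂) at which the 2×4 Jacobian of (f₂, g₂) has rank less than 2. -/
/-! A rank drop of the Jacobian means that its second row `(2M₁₂, 0, 4M₂₄, 2αM₃₄)` vanishes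
or is a multiple of the first row `(M₃₄, -M₂₄, -M₁₃, M₁₂)`. If it vanishes, the point is `ε₂`.
A proportionality `(M₃₄, M₁₂) = a • (2M₁₂, 2αM₃₄)` forces `M₂₄ = M₁₃ = 0`, and then on the
conic `M₁₂² + αM₃₄² = 0` it gives `2M₁₂² = 0`, so the point would be zero. -/

theorem Matrix.rank_eq_card_height_iff {R m n : Type*} [Field R] [Fintype m] [Fintype n]
    (A : Matrix m n R) : A.rank = Fintype.card m ↔ LinearIndependent R A.row := by
  rw [A.rank_eq_finrank_span_row, linearIndependent_iff_card_eq_finrank_span, Set.finrank,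
    eq_comm]

theorem Matrix.rank_lt_two_iff {R n : Type*} [Field R] [Fintype n] (A : Matrix (Fin 2) n R) :
    A.rank < 2 ↔ A.row 1 = 0 ∨ ∃ a : R, a • A.row 1 = A.row 0 := by
  have hle : A.rank ≤ 2 := by simpa using A.rank_le_card_height
  have hfull : A.rank = 2 ↔ LinearIndependent R A.row := by
    simpa using A.rank_eq_card_height_iff
  rw [← not_iff_not, not_lt, hle.ge_iff_eq, hfull, linearIndependent_fin2]
  simp only [not_or, not_exists]

theorem stmt_5_general (k : Type*) [Field k] [CharZero k]
    (α : k) (hα : α * (1 - α ^ 2) ≠ 0)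
    (M12 M13 M24 M34 : k) (hne : ¬(M12 = 0 ∧ M13 = 0 ∧ M24 = 0 ∧ M34 = 0))
    (hg : M12 ^ 2 + 2 * M24 ^ 2 + α * M34 ^ 2 = 0) :
    Matrix.rank !![M34, -M24, -M13, M12;
                   2 * M12, 0, 4 * M24, 2 * α * M34] < 2 ↔
      ∃ c : k, c ≠ 0 ∧ M12 = 0 ∧ M13 = c ∧ M24 = 0 ∧ M34 = 0 := by
  have hα0 : α ≠ 0 := left_ne_zero_of_mul hα
  rw [Matrix.rank_lt_two_iff]
  constructor
  · rintro (hrow | ⟨a, hrow⟩)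
    · obtain ⟨h12, h24, h34⟩ : M12 = 0 ∧ M24 = 0 ∧ M34 = 0 := by
        simpa [funext_iff, Fin.forall_fin_succ, hα0] using hrow
      exact ⟨M13, fun h13 => hne ⟨h12, h13, h24, h34⟩, h12, rfl, h24, h34⟩
    · obtain ⟨h34, rfl, h13, h12⟩ : a * (2 * M12) = M34 ∧ M24 = 0 ∧ a * (4 * M24) = -M13 ∧
          a * (2 * α * M34) = M12 := by
        simpa [funext_iff, Fin.forall_fin_succ] using hrow
      obtain rfl : M12 = 0 := by
        have : 2 * M12 ^ 2 = 0 := by linear_combination hg - M12 * h12 + α * M34 * h34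
        simpa using this
      exact absurd ⟨rfl, by simpa using h13.symm, rfl, by simpa using h34.symm⟩ hne
  · rintro ⟨c, -, rfl, rfl, rfl, rfl⟩
    left
    ext j
    fin_cases j <;> simp

theorem stmt_5 (k : Type*) [Field k] [IsAlgClosed k] [CharZero k]
    (α : k) (hα : α * (1 - α ^ 2) ≠ 0)
    (M12 M13 M24 M34 : k) (hne : ¬(M12 = 0 ∧ M13 = 0 ∧ M24 = 0 ∧ M34 = 0))
    (hf : M12 * M34 - M13 * M24 = 0)
    (hg : M12 ^ 2 + 2 * M24 ^ 2 + α * M34 ^ 2 = 0) :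
    Matrix.rank !![M34, -M24, -M13, M12;
                   2 * M12, 0, 4 * M24, 2 * α * M34] < 2 ↔
      ∃ c : k, c ≠ 0 ∧ M12 = 0 ∧ M13 = c ∧ M24 = 0 ∧ M34 = 0 :=
  stmt_5_general k α hα M12 M13 M24 M34 hne hg
end

section
/- Let k be an algebraically closed field of characteristic 0 and let i, a, b ∈ k with i² = −1, a² = α, b² = 2, where α(1−α²) ≠ 0. Define the affine curve C = {(x,z) ∈ k² : x² + 2x²z² + αz² = 0}. Then the maps χ(x,z) = −x(bz+i)/(az) (defined when z ≠ 0) and δ(t) = (a(1−t²)/(2bt), (1−t²)/(ib(1+t²))) (defined when t(t²+1) ≠ 0) satisfy: δ(t) ∈ C for all t with t(t²+1) ≠ 0, and χ(δ(t)) = t for all t with t(t²+1)(1−t²) ≠ 0 and δ(t) in the domain of χ. -/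
/-!
Put `w = a(1-t²)/(b(1+t²))`. The point `(x, z) = δ(t)` satisfies `x · 2t/(1+t²) = w` and
`a z = w / i`, while `1 + 2z² = (2t/(1+t²))²` because `(ib)² = -2`. Hence
`x² + 2x²z² + αz² = (x · 2t/(1+t²))² + (az)² = w² + (w/i)² = 0`.
For the inverse, `bz + i = -2t²/(i(1+t²))`, and substituting into `χ` everything but `t` cancels.
-/

section CurveParametrization

variable {K : Type*} [Field K] {α i a b : K}

lemma ne_zero_of_sq_eq_neg_one {x : K} (h : x ^ 2 = -1) : x ≠ 0 :=
  ne_zero_pow two_ne_zero (h ▸ neg_ne_zero.mpr one_ne_zero)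

def paramX (a b t : K) : K := a * (1 - t ^ 2) / (2 * b * t)

def paramZ (i b t : K) : K := (1 - t ^ 2) / (i * b * (1 + t ^ 2))

def chi (a b i x z : K) : K := -x * (b * z + i) / (a * z)

lemma paramX_mul [NeZero (2 : K)] (t : K) (ht : t ≠ 0) :
    paramX a b t * (2 * t / (1 + t ^ 2)) = a * (1 - t ^ 2) / (b * (1 + t ^ 2)) := by
  unfold paramX
  field_simp

lemma mul_paramZ (t : K) :
    a * paramZ i b t = a * (1 - t ^ 2) / (b * (1 + t ^ 2)) / i := by
  unfold paramZ
  simp only [div_eq_mul_inv, mul_inv]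
  ring

lemma one_add_two_mul_paramZ_sq [NeZero (2 : K)] (hi : i ^ 2 = -1) (hb : b ^ 2 = 2) (t : K)
    (ht1 : 1 + t ^ 2 ≠ 0) :
    1 + 2 * paramZ i b t ^ 2 = (2 * t / (1 + t ^ 2)) ^ 2 := by
  have hb0 : b ≠ 0 := ne_zero_pow two_ne_zero (hb ▸ two_ne_zero)
  have hi0 := ne_zero_of_sq_eq_neg_one hi
  unfold paramZ
  field_simp
  linear_combination (1 - t ^ 2) ^ 2 * b ^ 2 * hi - (1 - t ^ 2) ^ 2 * hb

theorem paramX_paramZ_mem_curve [NeZero (2 : K)] (hi : i ^ 2 = -1) (ha : a ^ 2 = α)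
    (hb : b ^ 2 = 2) (t : K) (ht : t ≠ 0) (ht1 : 1 + t ^ 2 ≠ 0) :
    paramX a b t ^ 2 + 2 * paramX a b t ^ 2 * paramZ i b t ^ 2 + α * paramZ i b t ^ 2 = 0 := by
  have hi0 := ne_zero_of_sq_eq_neg_one hi
  set w := a * (1 - t ^ 2) / (b * (1 + t ^ 2))
  calc paramX a b t ^ 2 + 2 * paramX a b t ^ 2 * paramZ i b t ^ 2 + α * paramZ i b t ^ 2
      = paramX a b t ^ 2 * (1 + 2 * paramZ i b t ^ 2) + (a * paramZ i b t) ^ 2 := by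
        rw [← ha]; ring
    _ = (paramX a b t * (2 * t / (1 + t ^ 2))) ^ 2 + (a * paramZ i b t) ^ 2 := by
        rw [one_add_two_mul_paramZ_sq hi hb t ht1]; ring
    _ = w ^ 2 + (w / i) ^ 2 := by rw [paramX_mul t ht, mul_paramZ]
    _ = 0 := by field_simp; linear_combination w ^ 2 * hi

lemma mul_paramZ_add (hi : i ^ 2 = -1) (hb0 : b ≠ 0) (t : K) (ht1 : 1 + t ^ 2 ≠ 0) :
    b * paramZ i b t + i = -2 * t ^ 2 / (i * (1 + t ^ 2)) := by
  have hi0 := ne_zero_of_sq_eq_neg_one hi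
  unfold paramZ
  field_simp
  linear_combination (1 + t ^ 2) * hi

theorem chi_paramX_paramZ [NeZero (2 : K)] (hi : i ^ 2 = -1) (ha0 : a ≠ 0) (hb0 : b ≠ 0)
    (t : K) (ht : t ≠ 0) (ht1 : 1 + t ^ 2 ≠ 0) (ht2 : 1 - t ^ 2 ≠ 0) :
    chi a b i (paramX a b t) (paramZ i b t) = t := by
  have hi0 := ne_zero_of_sq_eq_neg_one hi
  rw [chi, mul_paramZ_add hi hb0 t ht1, paramX, paramZ]
  field_simp

end CurveParametrization

theorem stmt_6_general (k : Type*) [Field k] [CharZero k]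
    (α i a b : k) (hα : α * (1 - α ^ 2) ≠ 0)
    (hi : i ^ 2 = -1) (ha : a ^ 2 = α) (hb : b ^ 2 = 2)
    (t : k) (ht : t * (t ^ 2 + 1) ≠ 0) :
    (a * (1 - t ^ 2) / (2 * b * t)) ^ 2
      + 2 * (a * (1 - t ^ 2) / (2 * b * t)) ^ 2 * ((1 - t ^ 2) / (i * b * (1 + t ^ 2))) ^ 2
      + α * ((1 - t ^ 2) / (i * b * (1 + t ^ 2))) ^ 2 = 0 ∧
    (t * (t ^ 2 + 1) * (1 - t ^ 2) ≠ 0 →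
      (1 - t ^ 2) / (i * b * (1 + t ^ 2)) ≠ 0 →
      -(a * (1 - t ^ 2) / (2 * b * t)) * (b * ((1 - t ^ 2) / (i * b * (1 + t ^ 2))) + i)
        / (a * ((1 - t ^ 2) / (i * b * (1 + t ^ 2)))) = t) := by
  obtain ⟨ht0, ht1⟩ : t ≠ 0 ∧ 1 + t ^ 2 ≠ 0 := by
    rw [add_comm]; exact mul_ne_zero_iff.mp ht
  have hb0 : b ≠ 0 := ne_zero_pow two_ne_zero (hb ▸ two_ne_zero)
  have ha0 : a ≠ 0 := by rintro rfl; apply hα; rw [← ha]; ring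
  refine ⟨paramX_paramZ_mem_curve hi ha hb t ht0 ht1, fun ht2 _ => ?_⟩
  exact chi_paramX_paramZ hi ha0 hb0 t ht0 ht1 (right_ne_zero_of_mul ht2)

theorem stmt_6 (k : Type*) [Field k] [IsAlgClosed k] [CharZero k]
    (α i a b : k) (hα : α * (1 - α ^ 2) ≠ 0)
    (hi : i ^ 2 = -1) (ha : a ^ 2 = α) (hb : b ^ 2 = 2)
    (t : k) (ht : t * (t ^ 2 + 1) ≠ 0) :
    (a * (1 - t ^ 2) / (2 * b * t)) ^ 2
      + 2 * (a * (1 - t ^ 2) / (2 * b * t)) ^ 2 * ((1 - t ^ 2) / (i * b * (1 + t ^ 2))) ^ 2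
      + α * ((1 - t ^ 2) / (i * b * (1 + t ^ 2))) ^ 2 = 0 ∧
    (t * (t ^ 2 + 1) * (1 - t ^ 2) ≠ 0 →
      (1 - t ^ 2) / (i * b * (1 + t ^ 2)) ≠ 0 →
      -(a * (1 - t ^ 2) / (2 * b * t)) * (b * ((1 - t ^ 2) / (i * b * (1 + t ^ 2))) + i)
        / (a * ((1 - t ^ 2) / (i * b * (1 + t ^ 2)))) = t) :=
  stmt_6_general k α i a b hα hi ha hb t ht
end

section
/- Let k be an algebraically closed field of characteristic 0 and α ∈ k with α(1−α²) ≠ 0. The projective plane curve V(w) ⊂ P² (coordinates M₁₃, M₂₃, M₃₄) defined by w = M₁₃²M₂₃ − αM₂₃²M₃₄ + 2M₂₃M₃₄² − αM₃₄³ is nonsingular: at every point of V(w), the gradient of w is nonzero. -/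
theorem stmt_8 (k : Type*) [Field k] [IsAlgClosed k] [CharZero k]
    (α : k) (hα : α * (1 - α ^ 2) ≠ 0)
    (M13 M23 M34 : k) (hne : ¬(M13 = 0 ∧ M23 = 0 ∧ M34 = 0))
    (hw : M13 ^ 2 * M23 - α * M23 ^ 2 * M34 + 2 * M23 * M34 ^ 2 - α * M34 ^ 3 = 0) :
    2 * M13 * M23 ≠ 0 ∨ M13 ^ 2 - 2 * α * M23 * M34 + 2 * M34 ^ 2 ≠ 0 ∨
      -(α * M23 ^ 2) + 4 * M23 * M34 - 3 * α * M34 ^ 2 ≠ 0 := by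
  by_contra h
  push_neg at h
  obtain ⟨h1, h2, h3⟩ := h
  have hα0 : α ≠ 0 := fun h => hα (by rw [h]; ring)
  have h1' : M13 * M23 = 0 := by
    have h1'' : 2 * (M13 * M23) = 0 := by linear_combination h1
    rcases mul_eq_zero.mp h1'' with h | h
    · exact absurd h two_ne_zero
    · exact h
  rcases mul_eq_zero.mp h1' with h13 | h23
  · -- M13 = 0
    have h2' : M34 * (M34 - α * M23) = 0 := by
      have : 2 * (M34 * (M34 - α * M23)) = M13 ^ 2 - 2 * α * M23 * M34 + 2 * M34 ^ 2 := by
        rw [h13]; ring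
      have h2'' : 2 * (M34 * (M34 - α * M23)) = 0 := by rw [this, h2]
      rcases mul_eq_zero.mp h2'' with h | h
      · exact absurd h two_ne_zero
      · exact h
    rcases mul_eq_zero.mp h2' with h34 | h34
    · -- M34 = 0
      have : -(α * M23 ^ 2) = 0 := by
        have := h3; rw [h34] at this; linear_combination this
      have hm23 : M23 = 0 := by
        have : α * M23 ^ 2 = 0 := by linear_combination -this
        rcases mul_eq_zero.mp this with h | h
        · exact absurd h hα0
        · exact pow_eq_zero_iff (n := 2) (by norm_num) |>.mp h
      exact hne ⟨h13, hm23, h34⟩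
    · -- M34 = α * M23
      have h34' : M34 = α * M23 := by linear_combination h34
      have key : 3 * (α * (1 - α ^ 2)) * M23 ^ 2 = 0 := by
        rw [h34'] at h3; linear_combination h3
      have hm23 : M23 = 0 := by
        rcases mul_eq_zero.mp key with h | h
        · rcases mul_eq_zero.mp h with h | h
          · exact absurd h (by norm_num)
          · exact absurd h hα
        · exact pow_eq_zero_iff (n := 2) (by norm_num) |>.mp h
      exact hne ⟨h13, hm23, by rw [h34', hm23, mul_zero]⟩
  · -- M23 = 0
    have hm34 : M34 = 0 := by
      have : -3 * α * M34 ^ 2 = 0 := by rw [h23] at h3; linear_combination h3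
      have : α * M34 ^ 2 = 0 := by
        have h3ne : (-3 : k) ≠ 0 := by norm_num
        rcases mul_eq_zero.mp (by rw [mul_assoc] at this; exact this) with h | h
        · exact absurd h h3ne
        · exact h
      rcases mul_eq_zero.mp this with h | h
      · exact absurd h hα0
      · exact pow_eq_zero_iff (n := 2) (by norm_num) |>.mp h
    have hm13 : M13 = 0 := by
      have : M13 ^ 2 = 0 := by rw [h23, hm34] at h2; linear_combination h2
      exact pow_eq_zero_iff (n := 2) (by norm_num) |>.mp this
    exact hne ⟨hm13, h23, hm34⟩
end

section
/- Let k be an algebraically closed field of characteristic 0, α ∈ k with α(1−α²) ≠ 0, and fix i, a ∈ k with i² = −1, a² = α. The intersection of the varieties L₁ = V(M₁₃, M₂₄, M₁₂M₃₄ + M₁₄M₂₃, M₁₂² + M₁₄² + αM₂₃² − 2M₂₃M₃₄ + αM₃₄²) and L₃ = V(M₂₃, M₂₄, M₃₄, M₁₂³ − M₁₃²M₁₄ + M₁₂M₁₄²) in P⁵ (coordinates M₁₂, M₁₃, M₁₄, M₂₃, M₂₄, M₃₄) consists of exactly the two points (1, 0, i, 0, 0, 0) and (1, 0, −i, 0,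 0, 0). -/
theorem stmt_10 (k : Type*) [Field k] [IsAlgClosed k] [CharZero k]
    (α i a : k) (hα : α * (1 - α ^ 2) ≠ 0) (hi : i ^ 2 = -1) (ha : a ^ 2 = α)
    (M12 M13 M14 M23 M24 M34 : k)
    (hne : ¬(M12 = 0 ∧ M13 = 0 ∧ M14 = 0 ∧ M23 = 0 ∧ M24 = 0 ∧ M34 = 0)) :
    ((M13 = 0 ∧ M24 = 0 ∧ M12 * M34 + M14 * M23 = 0 ∧
        M12 ^ 2 + M14 ^ 2 + α * M23 ^ 2 - 2 * M23 * M34 + α * M34 ^ 2 = 0) ∧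
     (M23 = 0 ∧ M24 = 0 ∧ M34 = 0 ∧ M12 ^ 3 - M13 ^ 2 * M14 + M12 * M14 ^ 2 = 0)) ↔
      ∃ c : k, c ≠ 0 ∧
        ((M12 = c ∧ M13 = 0 ∧ M14 = c * i ∧ M23 = 0 ∧ M24 = 0 ∧ M34 = 0) ∨
         (M12 = c ∧ M13 = 0 ∧ M14 = -(c * i) ∧ M23 = 0 ∧ M24 = 0 ∧ M34 = 0)) := by
  constructor
  · rintro ⟨⟨h13, h24, _, heq⟩, ⟨h23, _, h34, _⟩⟩
    subst h13 h24 h23 h34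
    have h2 : M12 ^ 2 + M14 ^ 2 = 0 := by linear_combination heq
    have h12 : M12 ≠ 0 := by
      intro h
      apply hne
      refine ⟨h, rfl, ?_, rfl, rfl, rfl⟩
      have : M14 ^ 2 = 0 := by linear_combination h2 - M12 * h
      exact pow_eq_zero_iff (n := 2) (by norm_num) |>.mp this
    refine ⟨M12, h12, ?_⟩
    have hfac : (M14 - M12 * i) * (M14 + M12 * i) = 0 := by
      linear_combination h2 - M12 ^ 2 * hi
    rcases mul_eq_zero.mp hfac with h | h
    · exact Or.inl ⟨rfl, rfl, by linear_combination h, rfl, rfl, rfl⟩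
    · exact Or.inr ⟨rfl, rfl, by linear_combination h, rfl, rfl, rfl⟩
  · rintro ⟨c, hc, ⟨h12, h13, h14, h23, h24, h34⟩ | ⟨h12, h13, h14, h23, h24, h34⟩⟩ <;>
      subst h12 h13 h14 h23 h24 h34 <;>
      refine ⟨⟨rfl, rfl, by ring, ?_⟩, rfl, rfl, rfl, ?_⟩ <;>
      first
        | linear_combination M12 ^ 2 * hi
        | linear_combination M12 ^ 3 * hi
end

section
/- Let k be an algebraically closed field of characteristic 0 and α ∈ k with α(1−α²) ≠ 0. The intersection in P⁵ of L₂ = V(M₁₄, M₂₃, M₁₂M₃₄ − M₁₃M₂₄, M₁₂² + 2M₂₄² + αM₃₄²), L₃ = V(M₂₃, M₂₄, M₃₄, M₁₂³ − M₁₃²M₁₄ + M₁₂M₁₄²), and L₄ = V(M₁₂, M₁₄, M₂₄, M₁₃²M₂₃ − αM₂₃²M₃₄ + 2M₂₃M₃₄² − αM₃₄³) pairwise each equal the single point E₂ = (0, 1, 0, 0, 0, 0); that is, L₂ ∩ L₃ = L₂ ∩ L₄ = L₃ ∩ L₄ = {E₂}. -/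
theorem stmt_11 (k : Type*) [Field k] [IsAlgClosed k] [CharZero k]
    (α : k) (hα : α * (1 - α ^ 2) ≠ 0)
    (M12 M13 M14 M23 M24 M34 : k)
    (hne : ¬(M12 = 0 ∧ M13 = 0 ∧ M14 = 0 ∧ M23 = 0 ∧ M24 = 0 ∧ M34 = 0)) :
    (((M14 = 0 ∧ M23 = 0 ∧ M12 * M34 - M13 * M24 = 0 ∧
          M12 ^ 2 + 2 * M24 ^ 2 + α * M34 ^ 2 = 0) ∧
      (M23 = 0 ∧ M24 = 0 ∧ M34 = 0 ∧ M12 ^ 3 - M13 ^ 2 * M14 + M12 * M14 ^ 2 = 0)) ↔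
        ∃ c : k, c ≠ 0 ∧
          M12 = 0 ∧ M13 = c ∧ M14 = 0 ∧ M23 = 0 ∧ M24 = 0 ∧ M34 = 0) ∧
    (((M14 = 0 ∧ M23 = 0 ∧ M12 * M34 - M13 * M24 = 0 ∧
          M12 ^ 2 + 2 * M24 ^ 2 + α * M34 ^ 2 = 0) ∧
      (M12 = 0 ∧ M14 = 0 ∧ M24 = 0 ∧
          M13 ^ 2 * M23 - α * M23 ^ 2 * M34 + 2 * M23 * M34 ^ 2 - α * M34 ^ 3 = 0)) ↔
        ∃ c : k, c ≠ 0 ∧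
          M12 = 0 ∧ M13 = c ∧ M14 = 0 ∧ M23 = 0 ∧ M24 = 0 ∧ M34 = 0) ∧
    (((M23 = 0 ∧ M24 = 0 ∧ M34 = 0 ∧ M12 ^ 3 - M13 ^ 2 * M14 + M12 * M14 ^ 2 = 0) ∧
      (M12 = 0 ∧ M14 = 0 ∧ M24 = 0 ∧
          M13 ^ 2 * M23 - α * M23 ^ 2 * M34 + 2 * M23 * M34 ^ 2 - α * M34 ^ 3 = 0)) ↔
        ∃ c : k, c ≠ 0 ∧
          M12 = 0 ∧ M13 = c ∧ M14 = 0 ∧ M23 = 0 ∧ M24 = 0 ∧ M34 = 0) := by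

  have hα0 : α ≠ 0 := fun h => hα (by rw [h]; ring)
  refine ⟨⟨?_, ?_⟩, ⟨?_, ?_⟩, ⟨?_, ?_⟩⟩
  · rintro ⟨⟨h14, h23, -, hq⟩, -, h24, h34, -⟩
    have h12 : M12 = 0 := by
      have : M12 ^ 2 = 0 := by rw [h24, h34] at hq; linear_combination hq
      exact pow_eq_zero_iff (n := 2) (by norm_num) |>.mp this
    refine ⟨M13, fun h => hne ⟨h12, h, h14, h23, h24, h34⟩, h12, rfl, h14, h23, h24, h34⟩
  · rintro ⟨c, hc, h12, h13, h14, h23, h24, h34⟩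
    subst h13
    exact ⟨⟨h14, h23, by rw [h12, h24]; ring, by rw [h12, h24, h34]; ring⟩,
      h23, h24, h34, by rw [h12, h14]; ring⟩
  · rintro ⟨⟨h14, h23, -, hq⟩, h12, -, h24, -⟩
    have h34 : M34 = 0 := by
      have : α * M34 ^ 2 = 0 := by rw [h12, h24] at hq; linear_combination hq
      have := (mul_eq_zero.mp this).resolve_left hα0
      exact pow_eq_zero_iff (n := 2) (by norm_num) |>.mp this
    refine ⟨M13, fun h => hne ⟨h12, h, h14, h23, h24, h34⟩, h12, rfl, h14, h23, h24, h34⟩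
  · rintro ⟨c, hc, h12, h13, h14, h23, h24, h34⟩
    subst h13
    exact ⟨⟨h14, h23, by rw [h12, h24]; ring, by rw [h12, h24, h34]; ring⟩,
      h12, h14, h24, by rw [h23, h34]; ring⟩
  · rintro ⟨⟨h23, h24, h34, -⟩, h12, h14, -, -⟩
    refine ⟨M13, fun h => hne ⟨h12, h, h14, h23, h24, h34⟩, h12, rfl, h14, h23, h24, h34⟩
  · rintro ⟨c, hc, h12, h13, h14, h23, h24, h34⟩
    subst h13
    exact ⟨⟨h23, h24, h34, by rw [h12, h14]; ring⟩,
      h12, h14, h24, by rw [h23, h34]; ring⟩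
end

section
/- Let k be an algebraically closed field of characteristic 0 and α ∈ k with α(1−α²) ≠ 0. The varieties L₁ = V(M₁₃, M₂₄, M₁₂M₃₄ + M₁₄M₂₃, M₁₂² + M₁₄² + αM₂₃² − 2M₂₃M₃₄ + αM₃₄²) and L₂ = V(M₁₄, M₂₃, M₁₂M₃₄ − M₁₃M₂₄, M₁₂² + 2M₂₄² + αM₃₄²) in P⁵ have empty intersection. -/
theorem stmt_13 (k : Type*) [Field k] [IsAlgClosed k] [CharZero k]
    (α : k) (hα : α * (1 - α ^ 2) ≠ 0)
    (M12 M13 M14 M23 M24 M34 : k)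
    (hne : ¬(M12 = 0 ∧ M13 = 0 ∧ M14 = 0 ∧ M23 = 0 ∧ M24 = 0 ∧ M34 = 0)) :
    ¬((M13 = 0 ∧ M24 = 0 ∧ M12 * M34 + M14 * M23 = 0 ∧
        M12 ^ 2 + M14 ^ 2 + α * M23 ^ 2 - 2 * M23 * M34 + α * M34 ^ 2 = 0) ∧
      (M14 = 0 ∧ M23 = 0 ∧ M12 * M34 - M13 * M24 = 0 ∧
        M12 ^ 2 + 2 * M24 ^ 2 + α * M34 ^ 2 = 0)) := by
  rintro ⟨⟨h13, h24, h1, h2⟩, ⟨h14, h23, h3, h4⟩⟩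
  subst h13 h24 h14 h23
  have hαne : α ≠ 0 := fun h => hα (by rw [h]; ring)
  simp only [mul_zero, zero_mul, sub_zero, add_zero, zero_pow] at h1 h2 h3 h4
  rcases mul_eq_zero.mp h1 with h | h
  · subst h
    have : α * M34 ^ 2 = 0 := by linear_combination h4
    have h34 : M34 = 0 := by
      rcases mul_eq_zero.mp this with h | h
      · exact absurd h hαne
      · exact pow_eq_zero_iff (n := 2) two_ne_zero |>.mp h
    exact hne ⟨rfl, rfl, rfl, rfl, rfl, h34⟩
  · subst h
    have h12 : M12 = 0 := by
      have : M12 ^ 2 = 0 := by linear_combination h4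
      exact pow_eq_zero_iff (n := 2) two_ne_zero |>.mp this
    exact hne ⟨h12, rfl, rfl, rfl, rfl, rfl⟩
end
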